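/- Let U ⊆ Ω be finite, S a nonnegative kernel, f(A) = Σ_{i ∈ U} max_{j ∈ A} S(i,j). Then the conditional mutual information satisfies I_f(A; Q | P) = f(A ∪ P) + f(Q ∪ P) − f(A ∪ Q ∪ P) − f(P) = Σ_{i ∈ U} max(min(max_{j ∈ A} S(i,j), max_{j ∈ Q} S(i,j)) − max_{j ∈ P} S(i,j), 0) for all nonempty A, Q, P ⊆ Ω. -/
import Mathlib

lemma max_arith (a q p : ℝ) :
    max a p + max q p - max (max a q) p - p = max (min a q - p) 0 := by
  simp only [max_def, min_def]
  split_ifs <;> linarith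

theorem fl_cmi {Ω : Type*} [Fintype Ω] [DecidableEq Ω]
    (U : Finset Ω) (S : Ω → Ω → ℝ) (hS : ∀ i j, 0 ≤ S i j)
    (A Q P : Finset Ω) (hA : A.Nonempty) (hQ : Q.Nonempty) (hP : P.Nonempty) :
    (∑ i ∈ U, (A ∪ P).sup' (hA.mono Finset.subset_union_left) (S i))
      + (∑ i ∈ U, (Q ∪ P).sup' (hQ.mono Finset.subset_union_left) (S i))
      - (∑ i ∈ U, (A ∪ Q ∪ P).sup' ((hA.mono Finset.subset_union_left).mono Finset.subset_union_left) (S i))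
      - ∑ i ∈ U, P.sup' hP (S i)
    = ∑ i ∈ U, max (min (A.sup' hA (S i)) (Q.sup' hQ (S i)) - P.sup' hP (S i)) 0 := by
  rw [← Finset.sum_add_distrib, ← Finset.sum_sub_distrib, ← Finset.sum_sub_distrib]
  refine Finset.sum_congr rfl fun i _ => ?_
  rw [Finset.sup'_union hA hP, Finset.sup'_union hQ hP,
    Finset.sup'_union (hA.mono Finset.subset_union_left) hP, Finset.sup'_union hA hQ]
  exact max_arith _ _ _
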